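/- arXiv:2010.03953 — 7 statements merged into one kernel-verified Lean document; each statement's English description precedes it below -/
import Mathlib

section
/- The double integral over the unit square of 1/(1 − x²y²) equals π²/8; that is, ∫₀¹∫₀¹ dx dy/(1 − x²y²) = π²/8, and this integral equals ∑_{k=0}^{∞} 1/(2k+1)². -/
open Real MeasureTheory intervalIntegral

/-!
Expanding `1 / (1 - x²y²) = ∑ₖ x^(2k) y^(2k)` and integrating term by term (first in `y`, then
in `x`; all terms are nonnegative) turns the double integral into `∑ₖ 1 / (2k+1)²`. This is the
sum of `1 / n²` over odd `n`, i.e. `ζ(2)` minus its even part `ζ(2) / 4`, hence `π² / 8`.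
-/

theorem hasSum_one_div_odd_sq :
    HasSum (fun k : ℕ => (1 : ℝ) / (2 * k + 1) ^ 2) (π ^ 2 / 8) := by
  set f : ℕ → ℝ := fun n => 1 / (n : ℝ) ^ 2
  have heven : HasSum (fun k => f (2 * k)) (π ^ 2 / 24) := by
    rw [show π ^ 2 / 24 = 1 / 4 * (π ^ 2 / 6) by ring]
    refine (hasSum_zeta_two.mul_left _).congr_fun fun k => ?_
    simp only [f]; push_cast; ring
  have hodd : Summable fun k => f (2 * k + 1) :=
    hasSum_zeta_two.summable.comp_injective fun a b h => by simpa using h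
  have hsplit := (heven.even_add_odd hodd.hasSum).unique hasSum_zeta_two
  rw [show π ^ 2 / 8 = π ^ 2 / 6 - π ^ 2 / 24 by ring, ← hsplit, add_sub_cancel_left]
  refine hodd.hasSum.congr_fun fun k => ?_
  simp only [f]; push_cast; rfl

theorem integral_tsum_mul_pow {c : ℕ → ℝ} (n : ℕ → ℕ) (hc : ∀ k, 0 ≤ c k)
    (hs : Summable fun k => c k / (n k + 1)) :
    ∫ t in (0 : ℝ)..1, ∑' k, c k * t ^ n k = ∑' k, c k / (n k + 1) := by
  have hterm : ∀ k, ∫ t in (0 : ℝ)..1, c k * t ^ n k = c k / (n k + 1) := fun k => by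
    simp; ring
  simp only [integral_of_le zero_le_one] at hterm ⊢
  rw [← integral_tsum_of_summable_integral_norm]
  · exact tsum_congr hterm
  · exact fun k => (continuous_const.mul (continuous_pow _)).integrableOn_Ioc
  · refine hs.congr fun k => ?_
    rw [← hterm]
    refine setIntegral_congr_fun measurableSet_Ioc fun t ht => ?_
    exact (Real.norm_of_nonneg (mul_nonneg (hc k) (pow_nonneg ht.1.le _))).symm

theorem integral_one_div_one_sub_sq_mul_sq {x : ℝ} (hx : x ^ 2 < 1) :
    ∫ y in (0 : ℝ)..1, 1 / (1 - x ^ 2 * y ^ 2) = ∑' k : ℕ, (x ^ 2) ^ k / (2 * k + 1) := by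
  have hgeom : ∀ y ∈ Set.uIcc (0 : ℝ) 1,
      1 / (1 - x ^ 2 * y ^ 2) = ∑' k : ℕ, (x ^ 2) ^ k * y ^ (2 * k) := by
    intro y hy
    rw [Set.uIcc_of_le zero_le_one] at hy
    have hy2 : y ^ 2 ≤ 1 := pow_le_one₀ hy.1 hy.2
    simp_rw [pow_mul, ← mul_pow]
    rw [tsum_geometric_of_lt_one (by positivity) (by nlinarith [sq_nonneg x]), one_div]
  have hs : Summable fun k : ℕ => (x ^ 2) ^ k / ((2 * k : ℕ) + 1 : ℝ) :=
    (summable_geometric_of_lt_one (sq_nonneg x) hx).of_nonneg_of_le (fun k => by positivity)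
      fun k => div_le_self (by positivity) (by simp)
  rw [integral_congr hgeom, integral_tsum_mul_pow (fun k => 2 * k) (fun k => by positivity) hs]
  push_cast; rfl

theorem integral_integral_one_div_one_sub_sq_mul_sq :
    ∫ x in (0 : ℝ)..1, ∫ y in (0 : ℝ)..1, 1 / (1 - x ^ 2 * y ^ 2) =
      ∑' k : ℕ, (1 : ℝ) / (2 * k + 1) ^ 2 := by
  -- At `x = 1` the inner integrand is not integrable, so the expansion holds only almost everywhere.
  have hinner : ∀ᵐ x, x ∈ Set.uIoc (0 : ℝ) 1 →
      ∫ y in (0 : ℝ)..1, 1 / (1 - x ^ 2 * y ^ 2) =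
        ∑' k : ℕ, 1 / (2 * k + 1 : ℝ) * x ^ (2 * k) := by
    filter_upwards [volume.ae_ne 1] with x hx1 hx
    rw [Set.uIoc_of_le zero_le_one] at hx
    rw [integral_one_div_one_sub_sq_mul_sq (pow_lt_one₀ hx.1.le (hx.2.lt_of_ne hx1) two_ne_zero)]
    exact tsum_congr fun k => by rw [pow_mul]; ring
  have hs : Summable fun k : ℕ => 1 / (2 * k + 1 : ℝ) / ((2 * k : ℕ) + 1 : ℝ) := by
    refine hasSum_one_div_odd_sq.summable.congr fun k => ?_
    push_cast; rw [div_div, ← sq]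
  rw [integral_congr_ae hinner,
    integral_tsum_mul_pow (fun k => 2 * k) (fun k => by positivity) hs]
  exact tsum_congr fun k => by push_cast; rw [div_div, ← sq]

/-- The double integral over the unit square of `1 / (1 − x²y²)` equals `π² / 8`,
and it equals the sum `∑_{k=0}^∞ 1 / (2k+1)²`. -/
theorem double_integral_one_sub_sq_mul_sq :
    (∫ x in (0:ℝ)..1, ∫ y in (0:ℝ)..1, 1 / (1 - x ^ 2 * y ^ 2)) = π ^ 2 / 8 ∧
    (∫ x in (0:ℝ)..1, ∫ y in (0:ℝ)..1, 1 / (1 - x ^ 2 * y ^ 2)) =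
      ∑' k : ℕ, (1 : ℝ) / (2 * k + 1) ^ 2 :=
  ⟨integral_integral_one_div_one_sub_sq_mul_sq.trans hasSum_one_div_odd_sq.tsum_eq,
    integral_integral_one_div_one_sub_sq_mul_sq⟩
end

section
/- For every positive integer N, the sum ∑_{n=1}^{N} cot²(nπ/(2N+1)) equals N(2N−1)/3. -/
/-!
By De Moivre, `sin ((2M+1)θ) = sin θ ^ (2M+1) · Im ((cot θ + i) ^ (2M+1))`, and expanding the
power shows that the imaginary part is a polynomial `P` of degree `M` in `cot² θ`, with leading
coefficient `C(2M+1, 1)` and next coefficient `-C(2M+1, 3)`. The angles `θ = nπ/(2M+1)`,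
`1 ≤ n ≤ M`, lie in `(0, π/2)`, where `cot²` is injective, so they give `M` distinct roots of `P`:
these are all of its roots, and their sum is `C(2M+1, 3) / C(2M+1, 1) = M(2M-1)/3`.
-/

open Real Finset Polynomial

theorem Finset.sum_range_two_mul {M : Type*} [AddCommMonoid M] (n : ℕ) (f : ℕ → M) :
    ∑ k ∈ range (2 * n), f k = ∑ j ∈ range n, (f (2 * j) + f (2 * j + 1)) := by
  induction n with
  | zero => simp
  | succ n ih =>
    rw [Nat.mul_succ, sum_range_succ, sum_range_succ, sum_range_succ, ih, add_assoc]

theorem Nat.cast_choose_three (K : Type*) [Field K] [CharZero K] (a : ℕ) :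
    (a.choose 3 : K) = a * (a - 1) * (a - 2) / 6 := by
  cases a with
  | zero => simp
  | succ b =>
    have h := congrArg (Nat.cast : ℕ → K) (Nat.add_one_mul_choose_eq b 2)
    push_cast [Nat.cast_choose_two] at h ⊢
    linear_combination -h / 3

lemma Complex.im_ofReal_mul_I_pow_two_mul (r : ℝ) (j : ℕ) :
    ((r : ℂ) * I ^ (2 * j)).im = 0 := by
  rw [pow_mul, I_sq]
  norm_cast

lemma Complex.im_ofReal_mul_I_pow_two_mul_add_one (r : ℝ) (j : ℕ) :
    ((r : ℂ) * I ^ (2 * j + 1)).im = (-1) ^ j * r := by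
  rw [pow_succ, pow_mul, I_sq, ← mul_assoc, mul_comm (r : ℂ)]
  norm_cast
  rw [Complex.mul_I_im, Complex.ofReal_re]

lemma Real.sin_nat_mul_eq_sin_pow_mul_im (n : ℕ) {θ : ℝ} (hθ : sin θ ≠ 0) :
    sin (n * θ) = sin θ ^ n * (((cot θ : ℂ) + Complex.I) ^ n).im := by
  have h : (cos θ : ℂ) + sin θ * Complex.I = (sin θ : ℂ) * (cot θ + Complex.I) := by
    have hθ' : (sin θ : ℂ) ≠ 0 := Complex.ofReal_ne_zero.mpr hθ
    rw [cot_eq_cos_div_sin, Complex.ofReal_div]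
    field_simp
  rw [← Complex.im_ofReal_mul, Complex.ofReal_pow, ← mul_pow, ← h, Complex.ofReal_cos,
    Complex.ofReal_sin, Complex.cos_add_sin_mul_I_pow, ← Complex.ofReal_natCast,
    ← Complex.ofReal_mul, ← Complex.ofReal_cos, ← Complex.ofReal_sin, Complex.add_im,
    Complex.ofReal_im, Complex.mul_I_im, Complex.ofReal_re, zero_add]

lemma Real.injOn_cot_sq : Set.InjOn (fun x => cot x ^ 2) (Set.Ioo 0 (π / 2)) := by
  intro x hx y hy h
  have hcot : ∀ z, cot z = (tan z)⁻¹ := fun z => by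
    rw [cot_eq_cos_div_sin, tan_eq_sin_div_cos, inv_div]
  have htan_pos : ∀ z ∈ Set.Ioo 0 (π / 2), 0 < tan z := fun z hz =>
    tan_pos_of_pos_of_lt_pi_div_two hz.1 hz.2
  simp only [hcot, inv_pow, inv_inj] at h
  refine injOn_tan ⟨by linarith [hx.1, pi_pos], hx.2⟩ ⟨by linarith [hy.1, pi_pos], hy.2⟩ ?_
  exact (sq_eq_sq₀ (htan_pos x hx).le (htan_pos y hy).le).mp h

theorem Polynomial.sum_eq_neg_nextCoeff_div_leadingCoeff {K ι : Type*} [Field K] {p : K[X]}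
    (hp : p ≠ 0) {s : Finset ι} {f : ι → K} (hf : Set.InjOn f s)
    (hroot : ∀ i ∈ s, p.eval (f i) = 0) (hcard : p.natDegree ≤ s.card) :
    ∑ i ∈ s, f i = -p.nextCoeff / p.leadingCoeff := by
  classical
  have hroots : p.roots = (s.image f).val :=
    roots_eq_of_natDegree_le_card_of_ne_zero (by simpa using hroot)
      (by rwa [card_image_of_injOn hf]) hp
  have hsplit : p.Splits := splits_iff_card_roots.mpr <| le_antisymm (card_roots' p) <| by
    rwa [hroots, ← Finset.card_def, card_image_of_injOn hf]
  rw [hsplit.nextCoeff_eq_neg_sum_roots_mul_leadingCoeff, hroots, Finset.sum_val,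
    sum_image hf]
  simp only [id_eq]
  field_simp [leadingCoeff_ne_zero.mpr hp]

/-- The polynomial `f` of the paper: by the symmetry of binomial coefficients, its coefficients
from the top down are `C(2M+1, 1), -C(2M+1, 3), …`. -/
noncomputable def cotSqPoly (M : ℕ) : ℝ[X] :=
  ∑ k ∈ range (M + 1), monomial k ((-1) ^ (M - k) * ((2 * M + 1).choose (2 * k) : ℝ))

lemma im_ofReal_add_I_pow_eq_eval_cotSqPoly (x : ℝ) (M : ℕ) :
    (((x : ℂ) + Complex.I) ^ (2 * M + 1)).im = (cotSqPoly M).eval (x ^ 2) := by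
  rw [add_pow, show 2 * M + 1 + 1 = 2 * (M + 1) by ring, sum_range_two_mul, Complex.im_sum,
    cotSqPoly, eval_finsetSum]
  refine sum_congr rfl fun k hk => ?_
  have hk : k ≤ M := Nat.lt_succ_iff.mp (mem_range.mp hk)
  rw [show 2 * M + 1 - 2 * k = 2 * (M - k) + 1 by omega,
    show 2 * M + 1 - (2 * k + 1) = 2 * (M - k) by omega, Complex.add_im,
    mul_right_comm _ (Complex.I ^ _), mul_right_comm _ (Complex.I ^ _)]
  norm_cast
  rw [Complex.im_ofReal_mul_I_pow_two_mul, Complex.im_ofReal_mul_I_pow_two_mul_add_one,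
    eval_monomial]
  push_cast
  ring

lemma coeff_cotSqPoly {M k : ℕ} (hk : k ≤ M) :
    (cotSqPoly M).coeff k = (-1) ^ (M - k) * ((2 * M + 1).choose (2 * k) : ℝ) := by
  simp only [cotSqPoly, finsetSum_coeff, coeff_monomial, sum_ite_eq', mem_range,
    Nat.lt_succ_iff.mpr hk, if_true]

lemma coeff_cotSqPoly_self (M : ℕ) : (cotSqPoly M).coeff M = 2 * M + 1 := by
  rw [coeff_cotSqPoly le_rfl, Nat.sub_self, pow_zero, one_mul, Nat.choose_succ_self_right]
  push_cast
  ring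

lemma cotSqPoly_ne_zero (M : ℕ) : cotSqPoly M ≠ 0 := fun h => by
  have := coeff_cotSqPoly_self M
  rw [h, coeff_zero] at this
  linarith [(by positivity : (0 : ℝ) < 2 * M + 1)]

lemma natDegree_cotSqPoly (M : ℕ) : (cotSqPoly M).natDegree = M := by
  refine natDegree_eq_of_le_of_coeff_ne_zero ?_ ?_
  · exact natDegree_sum_le_of_forall_le _ _ fun k hk =>
      (natDegree_monomial_le _).trans (Nat.lt_succ_iff.mp (mem_range.mp hk))
  · rw [coeff_cotSqPoly_self]
    positivity

lemma leadingCoeff_cotSqPoly (M : ℕ) : (cotSqPoly M).leadingCoeff = 2 * M + 1 := by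
  rw [leadingCoeff, natDegree_cotSqPoly, coeff_cotSqPoly_self]

lemma nextCoeff_cotSqPoly {M : ℕ} (hM : 0 < M) :
    (cotSqPoly M).nextCoeff = -(2 * M + 1).choose 3 := by
  rw [nextCoeff_of_natDegree_pos (by rwa [natDegree_cotSqPoly]), natDegree_cotSqPoly,
    coeff_cotSqPoly (Nat.sub_le M 1), Nat.sub_sub_self hM, pow_one, neg_one_mul,
    Nat.choose_symm_of_eq_add (show 2 * M + 1 = 2 * (M - 1) + 3 by omega)]

lemma cotSqPoly_eval_cot_sq {M n : ℕ} (hn₀ : 0 < n) (hn : n < 2 * M + 1) :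
    (cotSqPoly M).eval (cot (n * π / (2 * M + 1)) ^ 2) = 0 := by
  set θ := n * π / (2 * M + 1) with hθ_def
  have hθ : sin θ ≠ 0 := by
    refine (sin_pos_of_pos_of_lt_pi (by positivity) ?_).ne'
    rw [div_lt_iff₀ (by positivity)]
    have : (n : ℝ) < 2 * M + 1 := by exact_mod_cast hn
    nlinarith [pi_pos]
  have h := sin_nat_mul_eq_sin_pow_mul_im (2 * M + 1) hθ
  rw [im_ofReal_add_I_pow_eq_eval_cotSqPoly,
    show ((2 * M + 1 : ℕ) : ℝ) * θ = n * π by rw [hθ_def]; push_cast; field_simp,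
    sin_nat_mul_pi] at h
  exact (mul_eq_zero.mp h.symm).resolve_left (pow_ne_zero _ hθ)

/-- For every positive integer `N`,
`∑_{n=1}^{N} cot²(nπ/(2N+1)) = N(2N−1)/3`. -/
theorem sum_cot_sq (N : ℕ) (hN : 0 < N) :
    ∑ n ∈ Finset.Icc 1 N, Real.cot (n * π / (2 * N + 1)) ^ 2 =
      (N : ℝ) * (2 * N - 1) / 3 := by
  have hangle : Set.MapsTo (fun n : ℕ => n * π / (2 * N + 1)) (Icc 1 N)
      (Set.Ioo 0 (π / 2)) := by
    intro n hn
    have h₁ : (1 : ℝ) ≤ n := by exact_mod_cast (mem_Icc.mp hn).1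
    have h₂ : (n : ℝ) ≤ N := by exact_mod_cast (mem_Icc.mp hn).2
    refine ⟨by positivity, ?_⟩
    rw [div_lt_div_iff₀ (by positivity) two_pos]
    nlinarith [pi_pos]
  have hinj : Set.InjOn (fun n : ℕ => cot (n * π / (2 * N + 1)) ^ 2) (Icc 1 N) :=
    injOn_cot_sq.comp (fun a _ b _ h => by
      simpa [pi_ne_zero] using (div_left_inj' (by positivity : (2 * N + 1 : ℝ) ≠ 0)).mp h)
      hangle
  have hroot : ∀ n ∈ Icc 1 N, (cotSqPoly N).eval (cot (n * π / (2 * N + 1)) ^ 2) = 0 :=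
    fun n hn => cotSqPoly_eval_cot_sq (mem_Icc.mp hn).1 (by linarith [(mem_Icc.mp hn).2])
  rw [sum_eq_neg_nextCoeff_div_leadingCoeff (cotSqPoly_ne_zero N) hinj hroot
    (by simp [natDegree_cotSqPoly]), nextCoeff_cotSqPoly hN, leadingCoeff_cotSqPoly,
    Nat.cast_choose_three]
  push_cast
  field_simp
  ring
end

section
/- For every nonnegative integer m and every real x, sin((2m+1)x) = (2m+1) · sin x · ∏_{j=1}^{m} (1 − sin²x / sin²(jπ/(2m+1))). -/
/-!
Since `sin x = cos (π/2 - x)`, for `n = 2m+1` we have `sin (n x) = (-1)^m T_n(sin x)` with `T_n`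
the Chebyshev polynomial. Its roots `cos ((2k+1)π/2n) = sin ((m-k)π/n)` are `0` and the pairs
`±sin (jπ/n)`, `1 ≤ j ≤ m`, so `T_n(y) = 2^(2m) y ∏ⱼ (y² - sin² (jπ/n))`. The remaining constant
is fixed by comparing `sin (n x) / x → n` with `sin x / x → 1` as `x → 0`.
-/

open Real Finset Polynomial Polynomial.Chebyshev

lemma Real.mul_sinc (x : ℝ) : x * sinc x = sin x := by
  rcases eq_or_ne x 0 with rfl | hx
  · simp
  · rw [sinc_of_ne_zero hx, mul_div_cancel₀ _ hx]

lemma Real.mul_apply_zero_eq_of_sin_mul_eq {a c : ℝ} {g : ℝ → ℝ} (hg : Continuous g)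
    (h : ∀ x, sin (a * x) = c * sin x * g x) : c * g 0 = a := by
  have hsinc : (fun x ↦ a * sinc (a * x)) = fun x ↦ c * sinc x * g x := by
    refine Continuous.ext_on (dense_compl_singleton 0) (by fun_prop) (by fun_prop) fun x hx ↦ ?_
    refine mul_left_cancel₀ (Set.mem_compl_singleton_iff.mp hx) ?_
    calc x * (a * sinc (a * x)) = sin (a * x) := by rw [← mul_assoc, mul_comm x, mul_sinc]
      _ = x * (c * sinc x * g x) := by rw [h, ← mul_sinc x]; ring
  simpa using (congrFun hsinc 0).symm

lemma Real.sin_nat_mul_pi_div_pos {j n : ℕ} (hj : 0 < j) (hjn : j < n) :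
    0 < sin (j * π / n) := by
  have hn : (0 : ℝ) < n := by exact_mod_cast hj.trans hjn
  refine sin_pos_of_pos_of_lt_pi (by positivity) ?_
  rw [div_lt_iff₀ hn, mul_comm]
  exact mul_lt_mul_of_pos_left (by exact_mod_cast hjn) pi_pos

lemma Finset.prod_range_two_mul_add_one {M : Type*} [CommMonoid M] (m : ℕ) (f : ℕ → M) :
    ∏ k ∈ range (2 * m + 1), f k = f m * ∏ j ∈ Icc 1 m, f (m - j) * f (m + j) := by
  have hlow : ∏ k ∈ range m, f k = ∏ j ∈ Icc 1 m, f (m - j) :=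
    prod_nbij' (m - ·) (m - ·) (by simp; omega) (by simp; omega) (by simp; omega)
      (by simp; omega) (by simp; intros; congr; omega)
  have hhigh : ∏ k ∈ range m, f (m + 1 + k) = ∏ j ∈ Icc 1 m, f (m + j) := by
    rw [← Ico_add_one_right_eq_Icc, prod_Ico_eq_prod_range]
    simp [add_assoc, add_comm 1]
  rw [show 2 * m + 1 = m + 1 + m by ring, prod_range_add, prod_range_succ, hlow, hhigh,
    prod_mul_distrib, mul_right_comm, mul_comm]

namespace Polynomial.Chebyshev

theorem T_real_eval_eq_prod (n : ℕ) (y : ℝ) :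
    (T ℝ n).eval y = 2 ^ (n - 1) * ∏ k ∈ range n, (y - cos ((2 * k + 1) * π / (2 * n))) := by
  have hroots :
      (T ℝ n).roots = (range n).val.map fun k : ℕ ↦ cos ((2 * k + 1) * π / (2 * n)) := by
    rw [roots_T_real, image_val]
    exact Multiset.dedup_eq_self.mpr (roots_T_real_nodup n)
  have hcard : Multiset.card (T ℝ n).roots = (T ℝ n).natDegree := by
    simp [hroots, natDegree_T]
  conv_lhs => rw [← C_leadingCoeff_mul_prod_multiset_X_sub_C hcard]
  simp [leadingCoeff_T, hroots, eval_multiset_prod, prod_eq_multiset_prod]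

theorem T_real_two_mul_add_one_eval_eq_prod (m : ℕ) (y : ℝ) :
    (T ℝ (2 * m + 1)).eval y =
      2 ^ (2 * m) * y * ∏ j ∈ Icc 1 m, (y ^ 2 - sin (j * π / (2 * m + 1)) ^ 2) := by
  have hn : (2 * m + 1 : ℝ) ≠ 0 := by positivity
  have hcenter : (2 * m + 1) * π / (2 * (2 * m + 1)) = π / 2 := by field_simp
  have hpair : ∀ j ∈ Icc 1 m,
      (y - cos ((2 * ↑(m - j) + 1) * π / (2 * (2 * m + 1)))) *
        (y - cos ((2 * ↑(m + j) + 1) * π / (2 * (2 * m + 1)))) =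
      y ^ 2 - sin (j * π / (2 * m + 1)) ^ 2 := by
    intro j hj
    rw [Nat.cast_sub (mem_Icc.mp hj).2]
    push_cast
    rw [show (2 * (m - j : ℝ) + 1) * π / (2 * (2 * m + 1)) = π / 2 - j * π / (2 * m + 1) by
        field_simp; ring,
      show (2 * (m + j : ℝ) + 1) * π / (2 * (2 * m + 1)) = j * π / (2 * m + 1) + π / 2 by
        field_simp; ring,
      cos_pi_div_two_sub, cos_add_pi_div_two]
    ring
  have hprod := T_real_eval_eq_prod (2 * m + 1) y
  push_cast at hprod
  rw [hprod, prod_range_two_mul_add_one, hcenter, cos_pi_div_two, sub_zero, prod_congr rfl hpair]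
  ring

theorem T_real_eval_sin_two_mul_add_one (m : ℕ) (x : ℝ) :
    (T ℝ (2 * m + 1)).eval (sin x) = (-1) ^ m * sin ((2 * m + 1) * x) := by
  rw [← cos_pi_div_two_sub, T_real_cos, ← cos_pi_div_two_sub]
  push_cast
  rw [← cos_add_nat_mul_pi]
  ring_nf

end Polynomial.Chebyshev

/-- For every nonnegative integer `m` and real `x`,
`sin((2m+1)x) = (2m+1) sin x ∏_{j=1}^{m} (1 − sin²x / sin²(jπ/(2m+1)))`. -/
theorem sin_odd_mul_eq_prod (m : ℕ) (x : ℝ) :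
    Real.sin ((2 * m + 1) * x) =
      (2 * m + 1) * Real.sin x *
        ∏ j ∈ Finset.Icc 1 m,
          (1 - Real.sin x ^ 2 / Real.sin (j * π / (2 * m + 1)) ^ 2) := by
  set g : ℝ → ℝ := fun y ↦ ∏ j ∈ Icc 1 m, (sin y ^ 2 - sin (j * π / (2 * m + 1)) ^ 2)
  have hsin : ∀ y, sin ((2 * m + 1) * y) = (-1) ^ m * 2 ^ (2 * m) * sin y * g y := fun y ↦
    calc sin ((2 * m + 1) * y) = (-1) ^ m * ((-1) ^ m * sin ((2 * m + 1) * y)) := by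
          rw [← mul_assoc, ← mul_pow]; norm_num
      _ = (-1) ^ m * 2 ^ (2 * m) * sin y * g y := by
          rw [← T_real_eval_sin_two_mul_add_one, T_real_two_mul_add_one_eval_eq_prod]; ring
  have hconst : (-1) ^ m * 2 ^ (2 * m) * g 0 = 2 * m + 1 :=
    mul_apply_zero_eq_of_sin_mul_eq (by fun_prop) hsin
  have hroot : ∀ j ∈ Icc 1 m, sin (j * π / (2 * m + 1)) ≠ 0 := fun j hj ↦ by
    have := sin_nat_mul_pi_div_pos (n := 2 * m + 1) (mem_Icc.mp hj).1 (by grind)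
    push_cast at this
    exact this.ne'
  have hg0 : g 0 ≠ 0 := prod_ne_zero_iff.mpr fun j hj ↦ by simpa using hroot j hj
  have hfactor :
      ∏ j ∈ Icc 1 m, (1 - sin x ^ 2 / sin (j * π / (2 * m + 1)) ^ 2) = g x / g 0 := by
    simp only [g, sin_zero, ← prod_div_distrib]
    refine prod_congr rfl fun j hj ↦ ?_
    field_simp [hroot j hj]
    ring
  rw [hfactor, hsin, ← hconst]
  field_simp
end

section
/- For every positive integer n, the integrals I_n = ∫₀^{π/2} cos^{2n}x dx and J_n = ∫₀^{π/2} x² cos^{2n}x dx satisfy I_n = n(2n−1) J_{n−1} − 2n² J_n. -/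
/-! The two integrations by parts combine into one antiderivative: for `p = k + 2`, the function
`2x cosᵖ x + p x² sin x cosᵖ⁻¹ x` vanishes at `0` and `π/2`, and once `sin² = 1 − cos²` is used its
derivative is a combination of `cosᵖ x`, `x² cosᵖ x` and `x² cosᵖ⁻² x`. -/

open Real intervalIntegral

theorem hasDerivAt_cos_pow_potential (k : ℕ) (x : ℝ) :
    HasDerivAt (fun x => 2 * x * cos x ^ (k + 2) + (k + 2) * x ^ 2 * sin x * cos x ^ (k + 1))
      (2 * cos x ^ (k + 2) + (k + 2) ^ 2 * (x ^ 2 * cos x ^ (k + 2))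
        - (k + 2) * (k + 1) * (x ^ 2 * cos x ^ k)) x := by
  have hcos := hasDerivAt_cos x
  refine (((hasDerivAt_id x).const_mul 2).mul (hcos.pow (k + 2))).add
    ((((hasDerivAt_pow 2 x).const_mul ((k : ℝ) + 2)).mul (hasDerivAt_sin x)).mul
      (hcos.pow (k + 1))) |>.congr_deriv ?_
  simp only [id, Nat.add_sub_cancel, Pi.pow_apply, Pi.mul_apply]
  push_cast
  linear_combination -((k : ℝ) + 2) * (k + 1) * x ^ 2 * cos x ^ k * sin_sq_add_cos_sq x

theorem two_mul_integral_cos_pow_add_two (k : ℕ) :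
    2 * ∫ x in (0:ℝ)..π / 2, cos x ^ (k + 2) =
      (k + 2) * (k + 1) * (∫ x in (0:ℝ)..π / 2, x ^ 2 * cos x ^ k)
        - (k + 2) ^ 2 * ∫ x in (0:ℝ)..π / 2, x ^ 2 * cos x ^ (k + 2) := by
  have hFTC := integral_eq_sub_of_hasDerivAt (a := 0) (b := π / 2)
    (fun x _ => hasDerivAt_cos_pow_potential k x) (by apply Continuous.intervalIntegrable; fun_prop)
  have hint (j : ℕ) :
      IntervalIntegrable (fun x : ℝ => x ^ 2 * cos x ^ j) MeasureTheory.volume 0 (π / 2) := by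
    apply Continuous.intervalIntegrable; fun_prop
  have hcos :
      IntervalIntegrable (fun x : ℝ => cos x ^ (k + 2)) MeasureTheory.volume 0 (π / 2) := by
    apply Continuous.intervalIntegrable; fun_prop
  rw [integral_sub ((hcos.const_mul 2).add ((hint _).const_mul _)) ((hint _).const_mul _),
    integral_add (hcos.const_mul 2) ((hint _).const_mul _), integral_const_mul, integral_const_mul,
    integral_const_mul, cos_pi_div_two] at hFTC
  linear_combination hFTC

/-- For every positive integer `n`, with `Iₙ = ∫₀^{π/2} cos^{2n} x dx` and
`Jₙ = ∫₀^{π/2} x² cos^{2n} x dx`, we have `Iₙ = n(2n−1) J_{n−1} − 2n² Jₙ`. -/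
theorem matsuoka_recursion (n : ℕ) (hn : 0 < n) :
    (∫ x in (0:ℝ)..(π / 2), Real.cos x ^ (2 * n)) =
      (n : ℝ) * (2 * n - 1) *
          (∫ x in (0:ℝ)..(π / 2), x ^ 2 * Real.cos x ^ (2 * (n - 1))) -
        2 * (n : ℝ) ^ 2 * ∫ x in (0:ℝ)..(π / 2), x ^ 2 * Real.cos x ^ (2 * n) := by
  obtain ⟨m, rfl⟩ := Nat.exists_eq_add_one.mpr hn
  have h := two_mul_integral_cos_pow_add_two (2 * m)
  rw [show 2 * m + 2 = 2 * (m + 1) by ring] at h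
  rw [Nat.add_sub_cancel]
  push_cast at h ⊢
  linear_combination h / 2
end

section
/- For every nonnegative integer N, the integrals I_N = ∫₀^{π/2} cos^{2N}x dx and J_N = ∫₀^{π/2} x² cos^{2N}x dx satisfy J_N ≤ (π²/4)(I_N − I_{N+1}) = (π²/8) · I_N/(N+1). -/
open Real

/-!
Jordan's inequality `x ≤ (π/2) sin x` on `[0, π/2]` gives
`x² cos^{n} x ≤ (π²/4) sin² x cos^{n} x = (π²/4)(cos^{n} x - cos^{n+2} x)`; integrating, and
evaluating `I_n - I_{n+2} = I_n / (n + 2)` by the Wallis recursion, gives the bound.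
-/

lemma sq_le_pi_sq_div_four_mul_sin_sq {x : ℝ} (hx₀ : 0 ≤ x) (hx : x ≤ π / 2) :
    x ^ 2 ≤ π ^ 2 / 4 * sin x ^ 2 := by
  have hjordan : x ≤ π / 2 * sin x :=
    calc x = π / 2 * (2 / π * x) := by field_simp
      _ ≤ π / 2 * sin x := by gcongr; exact mul_le_sin hx₀ hx
  calc x ^ 2 ≤ (π / 2 * sin x) ^ 2 := pow_le_pow_left₀ hx₀ hjordan 2
    _ = π ^ 2 / 4 * sin x ^ 2 := by ring

lemma cos_pow_sub_cos_pow_add_two (x : ℝ) (n : ℕ) :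
    cos x ^ n - cos x ^ (n + 2) = sin x ^ 2 * cos x ^ n := by
  rw [pow_add, sin_sq]
  ring

lemma sq_mul_cos_pow_le {x : ℝ} (hx₀ : 0 ≤ x) (hx : x ≤ π / 2) (n : ℕ) :
    x ^ 2 * cos x ^ n ≤ π ^ 2 / 4 * (cos x ^ n - cos x ^ (n + 2)) := by
  have hcos : 0 ≤ cos x ^ n :=
    pow_nonneg (cos_nonneg_of_mem_Icc ⟨by linarith [pi_pos], hx⟩) n
  calc x ^ 2 * cos x ^ n ≤ π ^ 2 / 4 * sin x ^ 2 * cos x ^ n :=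
        mul_le_mul_of_nonneg_right (sq_le_pi_sq_div_four_mul_sin_sq hx₀ hx) hcos
    _ = π ^ 2 / 4 * (cos x ^ n - cos x ^ (n + 2)) := by
        rw [cos_pow_sub_cos_pow_add_two]; ring

lemma integral_sq_mul_cos_pow_le (n : ℕ) :
    (∫ x in (0:ℝ)..π / 2, x ^ 2 * cos x ^ n) ≤
      π ^ 2 / 4 * ((∫ x in (0:ℝ)..π / 2, cos x ^ n) - ∫ x in (0:ℝ)..π / 2, cos x ^ (n + 2)) := by
  rw [← intervalIntegral.integral_sub (Continuous.intervalIntegrable (by fun_prop) _ _) (Continuous.intervalIntegrable (by fun_prop) _ _),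
    ← intervalIntegral.integral_const_mul]
  exact intervalIntegral.integral_mono_on pi_div_two_pos.le (Continuous.intervalIntegrable (by fun_prop) _ _) (Continuous.intervalIntegrable (by fun_prop) _ _)
    fun x hx => sq_mul_cos_pow_le hx.1 hx.2 n

lemma integral_cos_pow_sub_integral_cos_pow_add_two (n : ℕ) :
    (∫ x in (0:ℝ)..π / 2, cos x ^ n) - ∫ x in (0:ℝ)..π / 2, cos x ^ (n + 2) =
      (∫ x in (0:ℝ)..π / 2, cos x ^ n) / (n + 2) := by
  rw [integral_cos_pow, cos_pi_div_two, sin_zero, zero_pow n.succ_ne_zero]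
  field_simp
  ring

/-- For every nonnegative integer `N`, with `Iₙ = ∫₀^{π/2} cos^{2n} x dx` and
`Jₙ = ∫₀^{π/2} x² cos^{2n} x dx`, we have
`J_N ≤ (π²/4)(I_N − I_{N+1}) = (π²/8) I_N / (N+1)`. -/
theorem matsuoka_bound (N : ℕ) :
    (∫ x in (0:ℝ)..(π / 2), x ^ 2 * Real.cos x ^ (2 * N)) ≤
        π ^ 2 / 4 *
          ((∫ x in (0:ℝ)..(π / 2), Real.cos x ^ (2 * N)) -
            ∫ x in (0:ℝ)..(π / 2), Real.cos x ^ (2 * (N + 1))) ∧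
      π ^ 2 / 4 *
          ((∫ x in (0:ℝ)..(π / 2), Real.cos x ^ (2 * N)) -
            ∫ x in (0:ℝ)..(π / 2), Real.cos x ^ (2 * (N + 1))) =
        π ^ 2 / 8 * (∫ x in (0:ℝ)..(π / 2), Real.cos x ^ (2 * N)) / (N + 1) := by
  rw [show 2 * (N + 1) = 2 * N + 2 by ring]
  refine ⟨integral_sq_mul_cos_pow_le (2 * N), ?_⟩
  rw [integral_cos_pow_sub_integral_cos_pow_add_two]
  push_cast
  field_simp
  ring
end

section
/- For every nonnegative integer n, (1/4ⁿ) ∑_{k=0}^{2ⁿ−1} 1/sin²((2k+1)π/2^{n+1}) = 1. -/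
open Real

/-! The level-`n + 1` angles `(2k+1)π/2^{n+2}` are exactly the halves `x/2` and `(x+π)/2` of the
level-`n` angles `x = (2k+1)π/2^{n+1}`, so the half-angle identity
`4 / sin² x = 1 / sin² (x/2) + 1 / sin² ((x+π)/2)` multiplies the sum by `4` at each level. -/

theorem four_div_sin_sq_eq_half_angles (x : ℝ) (hx : sin x ≠ 0) :
    4 / sin x ^ 2 = 1 / sin (x / 2) ^ 2 + 1 / sin ((x + π) / 2) ^ 2 := by
  have hcos : sin ((x + π) / 2) = cos (x / 2) := by
    rw [add_div, sin_add_pi_div_two]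
  have hsin : sin x = 2 * sin (x / 2) * cos (x / 2) := by
    rw [← sin_two_mul, mul_div_cancel₀ x two_ne_zero]
  have hs : sin (x / 2) ≠ 0 := fun h => hx (by simp [hsin, h])
  have hc : cos (x / 2) ≠ 0 := fun h => hx (by simp [hsin, h])
  rw [hcos, hsin]
  field_simp
  linear_combination -4 * sin_sq_add_cos_sq (x / 2)

theorem sin_odd_mul_pi_div_two_pow_pos {n k : ℕ} (hk : k < 2 ^ n) :
    0 < sin ((2 * k + 1) * π / 2 ^ (n + 1)) := by
  have hk' : (2 * k + 1 : ℝ) < 2 ^ (n + 1) := by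
    rw [pow_succ]; exact_mod_cast (by omega : 2 * k + 1 < 2 ^ n * 2)
  apply sin_pos_of_pos_of_lt_pi (by positivity)
  rw [div_lt_iff₀ (by positivity)]
  exact (mul_lt_mul_of_pos_right hk' pi_pos).trans_eq (mul_comm _ _)

theorem sum_one_div_sin_sq_odd_mul_pi_div_two_pow (n : ℕ) :
    ∑ k ∈ Finset.range (2 ^ n), 1 / sin ((2 * k + 1) * π / 2 ^ (n + 1)) ^ 2 = 4 ^ n := by
  induction n with
  | zero => simp
  | succ n ih =>
    rw [pow_succ' 4, ← ih, Finset.mul_sum, Nat.two_pow_succ, Finset.sum_range_add,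
      ← Finset.sum_add_distrib]
    refine Finset.sum_congr rfl fun k hk => ?_
    rw [mul_one_div, four_div_sin_sq_eq_half_angles _
      (sin_odd_mul_pi_div_two_pow_pos (Finset.mem_range.mp hk)).ne']
    congr 4 <;> push_cast <;> field_simp <;> ring

/-- For every nonnegative integer `n`,
`(1/4ⁿ) ∑_{k=0}^{2ⁿ−1} 1 / sin²((2k+1)π/2^{n+1}) = 1`. -/
theorem hofbauer_identity (n : ℕ) :
    (1 / 4 ^ n) *
        ∑ k ∈ Finset.range (2 ^ n),
          1 / Real.sin ((2 * k + 1) * π / 2 ^ (n + 1)) ^ 2 = 1 := by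
  rw [sum_one_div_sin_sq_odd_mul_pi_div_two_pow]
  field_simp
end

section
/- The double integral ∫_{−1}^{1} ∫_{−1}^{1} 1/(1 + 2xy + y²) dy dx over the square [−1,1] × [−1,1] equals π²/2. -/
/-!
For fixed `x ∈ (-1, 1)` the denominator is `(y + x)² + c²` with `c = √(1 - x²) > 0`, so the inner
integral is `(arctan ((1 + x) / c) + arctan ((1 - x) / c)) / c`. The two arguments multiply to `1`,
hence the arctangents add up to `π / 2`, and the outer integral is `π / 2 · ∫_{-1}^{1} dx / √(1 - x²)
= π / 2 · (arcsin 1 - arcsin (-1)) = π² / 2`.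
-/

open Real MeasureTheory intervalIntegral Set

theorem Real.arctan_add_arctan_of_mul_eq_one {a b : ℝ} (ha : 0 < a) (hab : a * b = 1) :
    arctan a + arctan b = π / 2 := by
  rw [eq_inv_of_mul_eq_one_right hab, arctan_inv_of_pos ha]
  ring

theorem integral_inv_add_sq_add_sq (a b x : ℝ) {c : ℝ} (hc : 0 < c) :
    ∫ y in a..b, ((y + x) ^ 2 + c ^ 2)⁻¹ =
      (arctan ((b + x) / c) - arctan ((a + x) / c)) / c := by
  have h_scale : ∀ y, ((y + x) ^ 2 + c ^ 2)⁻¹ = (c ^ 2)⁻¹ * (1 + (x / c + y / c) ^ 2)⁻¹ := by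
    intro y
    field_simp
    ring
  simp_rw [h_scale]
  rw [intervalIntegral.integral_const_mul, integral_comp_add_div (fun t => (1 + t ^ 2)⁻¹) hc.ne',
    integral_inv_one_add_sq, smul_eq_mul, add_comm (x / c), add_comm (x / c), ← add_div, ← add_div]
  field_simp

theorem integral_inv_sqrt_one_sub_sq : ∫ x in (-1 : ℝ)..1, (√(1 - x ^ 2))⁻¹ = π := by
  rw [integral_eq_sub_of_hasDerivAt_of_le (by norm_num) continuous_arcsin.continuousOn
    (fun x hx => by simpa using hasDerivAt_arcsin hx.1.ne' hx.2.ne)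
    (by simpa only [sqrt_inv] using Polynomial.Chebyshev.intervalIntegrable_sqrt_one_sub_sq_inv),
    arcsin_one, arcsin_neg, arcsin_one]
  ring

theorem integral_one_div_one_add_two_mul_add_sq {x : ℝ} (hx : x ∈ Ioo (-1 : ℝ) 1) :
    ∫ y in (-1 : ℝ)..1, 1 / (1 + 2 * x * y + y ^ 2) = π / 2 * (√(1 - x ^ 2))⁻¹ := by
  obtain ⟨hx₁, hx₂⟩ := hx
  set c := √(1 - x ^ 2)
  have hc : 0 < c := sqrt_pos.mpr (by nlinarith)
  have hc_sq : c ^ 2 = 1 - x ^ 2 := sq_sqrt (by nlinarith)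
  have h_complete_square : ∀ y, 1 / (1 + 2 * x * y + y ^ 2) = ((y + x) ^ 2 + c ^ 2)⁻¹ := by
    intro y
    rw [hc_sq]
    ring
  have h_arctan : arctan ((1 + x) / c) + arctan ((1 - x) / c) = π / 2 := by
    refine arctan_add_arctan_of_mul_eq_one (div_pos (by linarith) hc) ?_
    rw [div_mul_div_comm, div_eq_one_iff_eq (by positivity)]
    linear_combination -hc_sq
  simp_rw [h_complete_square]
  rw [integral_inv_add_sq_add_sq _ _ _ hc, show (-1 + x) / c = -((1 - x) / c) by ring, arctan_neg,
    sub_neg_eq_add, h_arctan]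
  ring

/-- The double integral `∫_{−1}^{1} ∫_{−1}^{1} 1/(1 + 2xy + y²) dy dx` over the
square `[−1,1] × [−1,1]` equals `π²/2`. -/
theorem double_integral_ivan :
    (∫ x in (-1:ℝ)..1, ∫ y in (-1:ℝ)..1, 1 / (1 + 2 * x * y + y ^ 2)) =
      π ^ 2 / 2 := by
  calc (∫ x in (-1:ℝ)..1, ∫ y in (-1:ℝ)..1, 1 / (1 + 2 * x * y + y ^ 2))
      = ∫ x in (-1:ℝ)..1, π / 2 * (√(1 - x ^ 2))⁻¹ :=
        integral_congr_Ioo_of_le (by norm_num) fun _ hx =>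
          integral_one_div_one_add_two_mul_add_sq hx
    _ = π ^ 2 / 2 := by
      rw [intervalIntegral.integral_const_mul, integral_inv_sqrt_one_sub_sq]
      ring
end
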